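/- Let V be a finite type and let F be a nonempty superset-closed family of finsets of V. If k is a natural number such that |M1 ∪ M2| ≤ k for every pair of minimal members M1, M2 of F, then for every natural number ℓ with ℓ ≥ k the ℓ-TAR graph of F is connected. -/

import Mathlib

/-! Every member `S` of `F` lies above a minimal member `M`, and `S` is joined to `M` in the
`ℓ`-TAR graph by deleting the elements of `S \ M` one at a time; superset-closedness keeps every
intermediate set in `F`. Two members `S ⊇ M` and `T ⊇ N` are then joined through the vertex
`M ∪ N`, whose cardinality is at most `k ≤ ℓ`. -/

variable {V : Type*} [Fintype V] [DecidableEq V]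

/-- A family of finsets is superset-closed if it is closed under taking supersets. -/
def SupersetClosed (F : Finset (Finset V)) : Prop :=
  ∀ ⦃S T : Finset V⦄, S ∈ F → S ⊆ T → T ∈ F

/-- A minimal member of a family: a member no proper subset of which is a member. -/
def IsMinimalMem (F : Finset (Finset V)) (M : Finset V) : Prop :=
  M ∈ F ∧ ∀ M' : Finset V, M' ⊂ M → M' ∉ F

/-- The TAR graph of a family of finsets: vertices are the members of the family,
two members being adjacent iff their symmetric difference has exactly one element. -/
def TARGraph (F : Finset (Finset V)) : SimpleGraph {S : Finset V // S ∈ F} where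
  Adj S T := (symmDiff S.1 T.1).card = 1
  symm := ⟨fun S T h => by show (symmDiff T.1 S.1).card = 1; rwa [symmDiff_comm]⟩
  loopless := ⟨fun S h => by simp [symmDiff_self] at h⟩

instance (F : Finset (Finset V)) : DecidableRel (TARGraph F).Adj :=
  fun S T => inferInstanceAs (Decidable ((symmDiff S.1 T.1).card = 1))

/-- The `k`-TAR graph: the subgraph of the TAR graph induced on members of
cardinality at most `k`. -/
def kTARGraph (F : Finset (Finset V)) (k : ℕ) :
    SimpleGraph {S : Finset V // S ∈ F ∧ S.card ≤ k} where
  Adj S T := (symmDiff S.1 T.1).card = 1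
  symm := ⟨fun S T h => by show (symmDiff T.1 S.1).card = 1; rwa [symmDiff_comm]⟩
  loopless := ⟨fun S h => by simp [symmDiff_self] at h⟩

omit [Fintype V] [DecidableEq V] in
lemma exists_isMinimalMem_subset (F : Finset (Finset V)) {S : Finset V} (hS : S ∈ F) :
    ∃ M, M ⊆ S ∧ IsMinimalMem F M := by
  obtain ⟨M, hMS, hM⟩ := exists_minimal_le_of_wellFoundedLT (· ∈ F) S hS
  exact ⟨M, hMS, hM.prop, fun _ hlt hmem => hM.not_prop_of_lt hlt hmem⟩

lemma card_symmDiff_erase_self {s : Finset V} {a : V} (ha : a ∈ s) :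
    (symmDiff (s.erase a) s).card = 1 := by
  rw [symmDiff_of_le (s.erase_subset a), Finset.sdiff_erase_self ha, Finset.card_singleton]

namespace kTARGraph

variable {F : Finset (Finset V)} {ℓ : ℕ}

lemma reachable_of_subset (hsup : SupersetClosed F) {S T : {S : Finset V // S ∈ F ∧ S.card ≤ ℓ}}
    (hST : S.1 ⊆ T.1) : (kTARGraph F ℓ).Reachable S T := by
  obtain ⟨B, hB⟩ := T
  induction B using Finset.strongInduction with
  | H B ih =>
    rcases hST.eq_or_ssubset with hEq | hss
    · exact Subtype.ext hEq ▸ .refl _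
    obtain ⟨a, haB, haS⟩ := Finset.exists_of_ssubset hss
    have hSB' : S.1 ⊆ B.erase a := Finset.subset_erase.mpr ⟨hST, haS⟩
    have hB' : B.erase a ∈ F ∧ (B.erase a).card ≤ ℓ :=
      ⟨hsup S.2.1 hSB', (Finset.card_erase_le).trans hB.2⟩
    exact (ih _ (Finset.erase_ssubset haB) hB' hSB').trans
      (SimpleGraph.Adj.reachable (card_symmDiff_erase_self haB))

lemma reachable_of_subset_of_subset (hsup : SupersetClosed F)
    {S T W : {S : Finset V // S ∈ F ∧ S.card ≤ ℓ}} (hS : W.1 ⊆ S.1) (hT : W.1 ⊆ T.1) :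
    (kTARGraph F ℓ).Reachable S T :=
  (reachable_of_subset hsup hS).symm.trans (reachable_of_subset hsup hT)

end kTARGraph

theorem stmt15 (F : Finset (Finset V)) (hne : F.Nonempty) (hsup : SupersetClosed F)
    (k : ℕ)
    (hk : ∀ M1 M2 : Finset V, IsMinimalMem F M1 → IsMinimalMem F M2 →
      (M1 ∪ M2).card ≤ k) :
    ∀ ℓ : ℕ, k ≤ ℓ → (kTARGraph F ℓ).Connected := by
  intro ℓ hℓ
  have hunion : ∀ M N, IsMinimalMem F M → IsMinimalMem F N → (M ∪ N).card ≤ ℓ :=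
    fun M N hM hN => (hk M N hM hN).trans hℓ
  obtain ⟨S₀, hS₀⟩ := hne
  obtain ⟨M₀, -, hM₀⟩ := exists_isMinimalMem_subset F hS₀
  rw [SimpleGraph.connected_iff]
  refine ⟨fun S T => ?_, ⟨⟨M₀, hM₀.1, by simpa using hunion M₀ M₀ hM₀ hM₀⟩⟩⟩
  obtain ⟨M, hMS, hM⟩ := exists_isMinimalMem_subset F S.2.1
  obtain ⟨N, hNT, hN⟩ := exists_isMinimalMem_subset F T.2.1
  let U : {S : Finset V // S ∈ F ∧ S.card ≤ ℓ} :=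
    ⟨M ∪ N, hsup hM.1 Finset.subset_union_left, hunion M N hM hN⟩
  let Mv : {S : Finset V // S ∈ F ∧ S.card ≤ ℓ} :=
    ⟨M, hM.1, (Finset.card_le_card Finset.subset_union_left).trans U.2.2⟩
  let Nv : {S : Finset V // S ∈ F ∧ S.card ≤ ℓ} :=
    ⟨N, hN.1, (Finset.card_le_card Finset.subset_union_right).trans U.2.2⟩
  exact (kTARGraph.reachable_of_subset_of_subset hsup (T := U) (W := Mv) hMS
    Finset.subset_union_left).trans
    (kTARGraph.reachable_of_subset_of_subset hsup (S := U) (W := Nv) Finset.subset_union_right hNT)
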